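/- arXiv:2212.14522 — 4 statements merged into one kernel-verified Lean document; each statement's English description precedes it below -/
import Mathlib

section
/- Let n ≥ 2, and let j and k be integers satisfying 1 ≤ j ≤ ⌊n/2⌋ and j ≤ k ≤ n − j. Then there exists a permutation π of length n with cpk π = j and cdes π = k. -/
/-!
Put the maximum first. Then position `n` is never a cyclic descent, and position `1` is always a
cyclic peak while `n` never is, so `cdes π = des π` and `cpk π = pk π + 1`. It remains to write
down a linear arrangement starting with `n` that has `k` descents and `j - 1` peaks: a decreasing
run of length `k - j + 1` after `n` contributes the first `k - j + 1` descents and no peak, and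
each of `j - 1` isolated descents further on contributes one descent and one peak.
-/

/-- A permutation: a list of distinct positive integers. -/
def IsPerm (π : List ℕ) : Prop := π.Nodup ∧ ∀ x ∈ π, 0 < x

/-- The descent set `Des π = {i ∈ {1,…,n−1} : π_i > π_{i+1}}` (1-based indexing). -/
def Des (π : List ℕ) : Finset ℕ :=
  (Finset.Icc 1 (π.length - 1)).filter fun i => π.getD i 0 < π.getD (i - 1) 0

/-- The descent number. -/
def des (π : List ℕ) : ℕ := (Des π).card

/-- The major index. -/
def maj (π : List ℕ) : ℕ := ∑ i ∈ Des π, i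

/-- The cyclic descent set `cDes π = {i ∈ {1,…,n} : π_i > π_{i+1}}`, indices mod `n`. -/
def cDes (π : List ℕ) : Finset ℕ :=
  (Finset.Icc 1 π.length).filter fun i => π.getD (i % π.length) 0 < π.getD (i - 1) 0

/-- The cyclic descent number. -/
def cdes (π : List ℕ) : ℕ := (cDes π).card

/-- The cyclic major index. -/
def cmaj (π : List ℕ) : ℕ := ∑ i ∈ cDes π, i

/-- The peak set `Pk π = {i ∈ {2,…,n−1} : π_{i−1} < π_i > π_{i+1}}` (1-based indexing). -/
def Pk (π : List ℕ) : Finset ℕ :=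
  (Finset.Icc 2 (π.length - 1)).filter fun i =>
    π.getD (i - 2) 0 < π.getD (i - 1) 0 ∧ π.getD i 0 < π.getD (i - 1) 0

/-- The peak number. -/
def pk (π : List ℕ) : ℕ := (Pk π).card

/-- The cyclic peak set `cPk π = {i ∈ {1,…,n} : π_{i−1} < π_i > π_{i+1}}`, indices mod `n`. -/
def cPk (π : List ℕ) : Finset ℕ :=
  (Finset.Icc 1 π.length).filter fun i =>
    π.getD ((i + π.length - 2) % π.length) 0 < π.getD (i - 1) 0 ∧
      π.getD (i % π.length) 0 < π.getD (i - 1) 0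

/-- The cyclic peak number. -/
def cpk (π : List ℕ) : ℕ := (cPk π).card

/-- The cyclic valley set `cVal π = {i ∈ {1,…,n} : π_{i−1} > π_i < π_{i+1}}`, indices mod `n`. -/
def cVal (π : List ℕ) : Finset ℕ :=
  (Finset.Icc 1 π.length).filter fun i =>
    π.getD (i - 1) 0 < π.getD ((i + π.length - 2) % π.length) 0 ∧
      π.getD (i - 1) 0 < π.getD (i % π.length) 0

/-- The cyclic valley number. -/
def cval (π : List ℕ) : ℕ := (cVal π).card

/-- The distribution of a linear statistic `st` over the `n` rotations of `π`,
i.e. the multiset-valued cyclic statistic induced by `st`, evaluated at `[π]`. -/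
def cycStat {A : Type*} (st : List ℕ → A) (π : List ℕ) : Multiset A :=
  (Multiset.range π.length).map fun i => st (π.rotate i)

/-- `τ` is a (linear) shuffle of `π` and `σ`. -/
def IsShuffle (π σ τ : List ℕ) : Prop :=
  π.Sublist τ ∧ σ.Sublist τ ∧ τ.length = π.length + σ.length

/-- `[τ]` is a cyclic shuffle of `[π]` and `[σ]`: some rotation of `τ` is a shuffle
of some rotation of `π` and some rotation of `σ`. -/
def IsCyclicShuffle (π σ τ : List ℕ) : Prop :=
  ∃ i j k, IsShuffle (π.rotate i) (σ.rotate j) (τ.rotate k)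

/-- The set of cyclic shuffles of `[π]` and `[σ]` (as elements of `Cycle ℕ`, so that each
cyclic shuffle is counted once) on which the statistic `cst` takes the value `v`. -/
def cycShuffleFiber {A : Type*} (cst : List ℕ → A) (π σ : List ℕ) (v : A) : Set (Cycle ℕ) :=
  {c : Cycle ℕ | ∃ τ : List ℕ, (↑τ : Cycle ℕ) = c ∧ IsCyclicShuffle π σ τ ∧ cst τ = v}

/-- A (rotation-invariant) statistic `cst` is cyclic shuffle-compatible if the distribution
of `cst` over the set of cyclic shuffles of `[π]` and `[σ]` (each cyclic shuffle counted
once) depends only on `cst π`, `cst σ`, `|π|` and `|σ|`. -/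
def CyclicShuffleCompatible {A : Type*} (cst : List ℕ → A) : Prop :=
  ∀ π σ π' σ' : List ℕ, IsPerm π → IsPerm σ → IsPerm π' → IsPerm σ' →
    π.Disjoint σ → π'.Disjoint σ' →
    π.length = π'.length → σ.length = σ'.length →
    cst π = cst π' → cst σ = cst σ' →
    ∀ v : A, (cycShuffleFiber cst π σ v).ncard = (cycShuffleFiber cst π' σ' v).ncard

open Finset

theorem List.getD_map_range (f : ℕ → ℕ) {n i : ℕ} (hi : i < n) :
    ((List.range n).map f).getD i 0 = f i := by
  simp [hi]

theorem cDes_eq_Des {π : List ℕ} (h : π.getD (π.length - 1) 0 < π.getD 0 0) :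
    cDes π = Des π := by
  ext i
  simp only [cDes, Des, mem_filter, mem_Icc]
  constructor
  · rintro ⟨⟨hi1, hin⟩, hdesc⟩
    obtain hlt | rfl := hin.lt_or_eq
    · rw [Nat.mod_eq_of_lt hlt] at hdesc
      exact ⟨⟨hi1, by omega⟩, hdesc⟩
    · rw [Nat.mod_self] at hdesc
      exact absurd h (not_lt.2 hdesc.le)
  · rintro ⟨⟨hi1, hin⟩, hdesc⟩
    have hlt : i < π.length := by omega
    exact ⟨⟨hi1, hlt.le⟩, by rwa [Nat.mod_eq_of_lt hlt]⟩

theorem cPk_eq_insert_Pk {π : List ℕ} (hlen : 2 ≤ π.length)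
    (hmax : ∀ i, 1 ≤ i → i < π.length → π.getD i 0 < π.getD 0 0) :
    cPk π = insert 1 (Pk π) := by
  ext i
  simp only [cPk, Pk, mem_filter, mem_Icc, mem_insert]
  obtain rfl | hi1 := eq_or_ne i 1
  · have hlast : (1 + π.length - 2) % π.length = π.length - 1 := by
      rw [Nat.mod_eq_of_lt (by omega)]; omega
    simp only [hlast, Nat.mod_eq_of_lt (by omega : 1 < π.length), Nat.sub_self, true_or,
      iff_true]
    exact ⟨⟨le_rfl, by omega⟩, hmax (π.length - 1) (by omega) (by omega),
      hmax 1 le_rfl (by omega)⟩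
  obtain rfl | hin := eq_or_ne i π.length
  · simp only [Nat.mod_self, hi1, false_or]
    constructor
    · rintro ⟨-, -, hdesc⟩
      exact absurd (hmax (π.length - 1) (by omega) (by omega)) (not_lt.2 hdesc.le)
    · rintro ⟨h, -⟩
      omega
  by_cases hi : 2 ≤ i ∧ i < π.length
  · have hprev : (i + π.length - 2) % π.length = i - 2 := by
      rw [show i + π.length - 2 = i - 2 + π.length by omega, Nat.add_mod_right,
        Nat.mod_eq_of_lt (by omega)]
    simp only [hprev, Nat.mod_eq_of_lt hi.2, hi1, false_or]
    exact and_congr_left' (by omega)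
  · constructor
    · rintro ⟨h, -⟩; omega
    · rintro (h | ⟨h, -⟩) <;> omega

theorem cpk_eq_pk_add_one {π : List ℕ} (hlen : 2 ≤ π.length)
    (hmax : ∀ i, 1 ≤ i → i < π.length → π.getD i 0 < π.getD 0 0) :
    cpk π = pk π + 1 := by
  rw [cpk, cPk_eq_insert_Pk hlen hmax, card_insert_of_notMem, pk]
  simp [Pk]

theorem Des_map_range (f : ℕ → ℕ) (n : ℕ) :
    Des ((List.range n).map f) = (Icc 1 (n - 1)).filter fun i => f i < f (i - 1) := by
  rw [Des, List.length_map, List.length_range]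
  refine filter_congr fun i hi => ?_
  rw [mem_Icc] at hi
  rw [List.getD_map_range f (by omega), List.getD_map_range f (by omega)]

theorem Pk_map_range (f : ℕ → ℕ) (n : ℕ) :
    Pk ((List.range n).map f) =
      (Icc 2 (n - 1)).filter fun i => f (i - 2) < f (i - 1) ∧ f i < f (i - 1) := by
  rw [Pk, List.length_map, List.length_range]
  refine filter_congr fun i hi => ?_
  rw [mem_Icc] at hi
  rw [List.getD_map_range f (by omega), List.getD_map_range f (by omega),
    List.getD_map_range f (by omega)]

def zigzagPeaks (m j : ℕ) : Finset ℕ := (Ico 1 j).image fun t => m + 1 + 2 * t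

theorem mem_zigzagPeaks {m j i : ℕ} :
    i ∈ zigzagPeaks m j ↔ m + 3 ≤ i ∧ i < m + 2 * j ∧ (i - m) % 2 = 1 := by
  simp only [zigzagPeaks, mem_image, mem_Ico]
  constructor
  · rintro ⟨t, ht, rfl⟩; omega
  · intro h; exact ⟨(i - m - 1) / 2, by omega, by omega⟩

theorem disjoint_Icc_zigzagPeaks (m j : ℕ) : Disjoint (Icc 1 (m + 1)) (zigzagPeaks m j) := by
  rw [disjoint_left]
  intro i hi hz
  rw [mem_Icc] at hi
  rw [mem_zigzagPeaks] at hz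
  omega

theorem card_zigzagPeaks (m j : ℕ) : (zigzagPeaks m j).card = j - 1 := by
  rw [zigzagPeaks, card_image_of_injective _ fun a b h => by omega, Nat.card_Ico]

/-- Read at positions `i = 0, …, n - 1`: first `n`, then the decreasing run `m + 1, …, 1`, then
`j - 1` ascent–descent pairs alternating between the largest unused values `n - 1, n - 2, …` and
the smallest ones `m + 2, m + 3, …`, then the remaining values in increasing order. -/
def cpkCdesEntry (n j m i : ℕ) : ℕ :=
  if i = 0 then n
  else if i ≤ m + 1 then m + 2 - i
  else if i ≤ m + 2 * j - 2 ∧ (i - m) % 2 = 0 then n - (i - m) / 2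
  else if i ≤ m + 2 * j - 2 then m + 2 + (i - m - 3) / 2
  else i + 1 - j

def cpkCdesWitness (n j m : ℕ) : List ℕ := (List.range n).map (cpkCdesEntry n j m)

section witness

variable {n j m : ℕ}

theorem eq_of_cpkCdesEntry_eq (hj : 1 ≤ j) (hn : m + 2 * j ≤ n) {a b : ℕ} (ha : a < n)
    (hb : b < n) (h : cpkCdesEntry n j m a = cpkCdesEntry n j m b) : a = b := by
  unfold cpkCdesEntry at h; split_ifs at h <;> omega

theorem cpkCdesEntry_pos {i : ℕ} (hi : i < n) : 0 < cpkCdesEntry n j m i := by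
  unfold cpkCdesEntry; split_ifs <;> omega

theorem cpkCdesEntry_lt_zero (hj : 1 ≤ j) (hn : m + 2 * j ≤ n) {i : ℕ} (hi1 : 1 ≤ i)
    (hi : i < n) :
    cpkCdesEntry n j m i < cpkCdesEntry n j m 0 := by
  unfold cpkCdesEntry; split_ifs <;> omega

theorem cpkCdesEntry_lt_pred_iff (hj : 1 ≤ j) (hn : m + 2 * j ≤ n) {i : ℕ} (hi1 : 1 ≤ i)
    (hi : i < n) :
    cpkCdesEntry n j m i < cpkCdesEntry n j m (i - 1) ↔
      i ≤ m + 1 ∨ i ∈ zigzagPeaks m j := by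
  rw [mem_zigzagPeaks]; unfold cpkCdesEntry; split_ifs <;> omega

theorem cpkCdesEntry_isPeak_iff (hj : 1 ≤ j) (hn : m + 2 * j ≤ n) {i : ℕ} (hi2 : 2 ≤ i)
    (hi : i < n) :
    cpkCdesEntry n j m (i - 2) < cpkCdesEntry n j m (i - 1) ∧
      cpkCdesEntry n j m i < cpkCdesEntry n j m (i - 1) ↔ i ∈ zigzagPeaks m j := by
  have hne : cpkCdesEntry n j m (i - 2) ≠ cpkCdesEntry n j m (i - 1) :=
    fun h => by have := eq_of_cpkCdesEntry_eq hj hn (by omega) (by omega) h; omega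
  have hprev := cpkCdesEntry_lt_pred_iff hj hn (i := i - 1) (by omega) (by omega)
  rw [show i - 1 - 1 = i - 2 by omega] at hprev
  rw [cpkCdesEntry_lt_pred_iff hj hn (by omega) hi, lt_iff_le_and_ne, ← not_lt, hprev]
  simp only [mem_zigzagPeaks]
  omega

theorem length_cpkCdesWitness : (cpkCdesWitness n j m).length = n := by
  simp [cpkCdesWitness]

theorem isPerm_cpkCdesWitness (hj : 1 ≤ j) (hn : m + 2 * j ≤ n) :
    IsPerm (cpkCdesWitness n j m) := by
  refine ⟨List.nodup_range.map_on fun a ha b hb => ?_, fun x hx => ?_⟩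
  · exact eq_of_cpkCdesEntry_eq hj hn (List.mem_range.1 ha) (List.mem_range.1 hb)
  · obtain ⟨i, hi, rfl⟩ := List.mem_map.1 hx
    exact cpkCdesEntry_pos (List.mem_range.1 hi)

theorem getD_cpkCdesWitness_lt_head (hj : 1 ≤ j) (hn : m + 2 * j ≤ n) (i : ℕ) (hi1 : 1 ≤ i)
    (hi : i < (cpkCdesWitness n j m).length) :
    (cpkCdesWitness n j m).getD i 0 < (cpkCdesWitness n j m).getD 0 0 := by
  rw [length_cpkCdesWitness] at hi
  rw [cpkCdesWitness, List.getD_map_range _ hi, List.getD_map_range _ (by omega)]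
  exact cpkCdesEntry_lt_zero hj hn hi1 hi

theorem Des_cpkCdesWitness (hj : 1 ≤ j) (hn : m + 2 * j ≤ n) :
    Des (cpkCdesWitness n j m) = Icc 1 (m + 1) ∪ zigzagPeaks m j := by
  ext i
  rw [cpkCdesWitness, Des_map_range, mem_filter, mem_Icc, mem_union, mem_Icc]
  constructor
  · rintro ⟨hi, hdesc⟩
    rcases (cpkCdesEntry_lt_pred_iff hj hn hi.1 (by omega)).1 hdesc with h | h
    · exact Or.inl ⟨hi.1, h⟩
    · exact Or.inr h
  · intro h
    have hi : 1 ≤ i ∧ i ≤ n - 1 := by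
      rcases h with h | h
      · omega
      · rw [mem_zigzagPeaks] at h; omega
    refine ⟨hi, (cpkCdesEntry_lt_pred_iff hj hn hi.1 (by omega)).2 ?_⟩
    exact h.imp And.right id

theorem Pk_cpkCdesWitness (hj : 1 ≤ j) (hn : m + 2 * j ≤ n) :
    Pk (cpkCdesWitness n j m) = zigzagPeaks m j := by
  ext i
  rw [cpkCdesWitness, Pk_map_range, mem_filter, mem_Icc]
  constructor
  · rintro ⟨hi, hpeak⟩
    exact (cpkCdesEntry_isPeak_iff hj hn hi.1 (by omega)).1 hpeak
  · intro h
    have hi : 2 ≤ i ∧ i ≤ n - 1 := by rw [mem_zigzagPeaks] at h; omega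
    exact ⟨hi, (cpkCdesEntry_isPeak_iff hj hn hi.1 (by omega)).2 h⟩

end witness

theorem exists_perm_cpk_cdes_general (n j k : ℕ) (hj1 : 1 ≤ j) (hk1 : j ≤ k) (hk2 : k ≤ n - j) :
    ∃ π : List ℕ, IsPerm π ∧ π.length = n ∧ cpk π = j ∧ cdes π = k := by
  obtain ⟨m, rfl⟩ : ∃ m, k = m + j := ⟨k - j, by omega⟩
  have hn : m + 2 * j ≤ n := by omega
  have hlen := length_cpkCdesWitness (n := n) (j := j) (m := m)
  have hhead := getD_cpkCdesWitness_lt_head hj1 hn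
  refine ⟨cpkCdesWitness n j m, isPerm_cpkCdesWitness hj1 hn, hlen, ?_, ?_⟩
  · rw [cpk_eq_pk_add_one (by omega) hhead, pk, Pk_cpkCdesWitness hj1 hn, card_zigzagPeaks]
    omega
  · rw [cdes, cDes_eq_Des (hhead _ (by omega) (by omega)), Des_cpkCdesWitness hj1 hn,
      card_union_of_disjoint (disjoint_Icc_zigzagPeaks m j), Nat.card_Icc, card_zigzagPeaks]
    omega

/-- For `n ≥ 2`, `1 ≤ j ≤ ⌊n/2⌋` and `j ≤ k ≤ n − j`, there is a permutation of
length `n` with `cpk π = j` and `cdes π = k`. -/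
theorem exists_perm_cpk_cdes (n j k : ℕ) (hn : 2 ≤ n) (hj1 : 1 ≤ j) (hj2 : j ≤ n / 2)
    (hk1 : j ≤ k) (hk2 : k ≤ n - j) :
    ∃ π : List ℕ, IsPerm π ∧ π.length = n ∧ cpk π = j ∧ cdes π = k :=
  exists_perm_cpk_cdes_general n j k hj1 hk1 hk2
end

section
/- The cyclic statistics Des and cDes are equivalent: for all permutations π and σ of the same length, the multiset {{Des π̄ : π̄ ∈ [π]}} equals the multiset {{Des σ̄ : σ̄ ∈ [σ]}} if and only if the multiset {{cDes π̄ : π̄ ∈ [π]}} equals the multiset {{cDes σ̄ : σ̄ ∈ [σ]}}. -/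
section Aux

lemma mem_cDes' {τ : List ℕ} {i : ℕ} :
    i ∈ cDes τ ↔ 1 ≤ i ∧ i ≤ τ.length ∧ τ.getD (i % τ.length) 0 < τ.getD (i - 1) 0 := by
  simp [cDes, Finset.mem_filter, Finset.mem_Icc, and_assoc]

lemma mem_Des' {τ : List ℕ} {i : ℕ} :
    i ∈ Des τ ↔ 1 ≤ i ∧ i ≤ τ.length - 1 ∧ τ.getD i 0 < τ.getD (i - 1) 0 := by
  simp [Des, Finset.mem_filter, Finset.mem_Icc, and_assoc]

lemma Des_eq_erase (τ : List ℕ) : Des τ = (cDes τ).erase τ.length := by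
  ext i
  simp only [mem_Des', Finset.mem_erase, mem_cDes']
  constructor
  · rintro ⟨h1, h2, h3⟩
    have hlt : i < τ.length := by omega
    rw [Nat.mod_eq_of_lt hlt]
    exact ⟨by omega, h1, by omega, h3⟩
  · rintro ⟨hne, h1, h2, h3⟩
    have hlt : i < τ.length := by omega
    rw [Nat.mod_eq_of_lt hlt] at h3
    exact ⟨h1, by omega, h3⟩

lemma getD_rotate (τ : List ℕ) (k j : ℕ) (hj : j < τ.length) :
    (τ.rotate k).getD j 0 = τ.getD ((j + k) % τ.length) 0 := by
  have h1 : j < (τ.rotate k).length := by rwa [List.length_rotate]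
  have h2 : (j + k) % τ.length < τ.length := Nat.mod_lt _ (by omega)
  rw [List.getD_eq_getElem _ _ h1, List.getD_eq_getElem _ _ h2, List.getElem_rotate]

lemma mem_cDes_rotate_one {τ : List ℕ} {i : ℕ} (hi1 : 1 ≤ i) (hi2 : i ≤ τ.length) :
    i ∈ cDes (τ.rotate 1) ↔ i % τ.length + 1 ∈ cDes τ := by
  have hn1 : 1 ≤ τ.length := le_trans hi1 hi2
  rw [mem_cDes', mem_cDes', List.length_rotate]
  rcases eq_or_lt_of_le hi2 with rfl | hilt
  · -- i = length
    rw [Nat.mod_self]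
    rw [getD_rotate τ 1 0 (by omega), getD_rotate τ 1 (τ.length - 1) (by omega)]
    have e1 : (τ.length - 1 + 1) % τ.length = 0 := by
      have e : τ.length - 1 + 1 = τ.length := by omega
      rw [e, Nat.mod_self]
    rw [e1]
    constructor
    · rintro ⟨a, b, c⟩; exact ⟨by omega, by omega, c⟩
    · rintro ⟨a, b, c⟩; exact ⟨by omega, by omega, c⟩
  · -- i < length
    have e0 : i % τ.length = i := Nat.mod_eq_of_lt hilt
    rw [e0]
    rw [getD_rotate τ 1 i hilt, getD_rotate τ 1 (i - 1) (by omega)]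
    have e2 : i - 1 + 1 = i := by omega
    rw [e2, Nat.mod_eq_of_lt hilt]
    have e3 : i + 1 - 1 = i := by omega
    rw [e3]
    constructor
    · rintro ⟨a, b, c⟩; exact ⟨by omega, by omega, c⟩
    · rintro ⟨a, b, c⟩; exact ⟨by omega, by omega, c⟩

lemma cdes_rotate_one (τ : List ℕ) : cdes (τ.rotate 1) = cdes τ := by
  unfold cdes
  by_cases hn : τ.length = 0
  · have : τ = [] := List.length_eq_zero_iff.mp hn
    subst this; simp
  apply Finset.card_bij' (fun i _ => i % τ.length + 1)
      (fun j _ => if j = 1 then τ.length else j - 1)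
  · intro i hi
    have h := mem_cDes'.mp hi
    rw [List.length_rotate] at h
    exact (mem_cDes_rotate_one h.1 h.2.1).mp hi
  · intro j hj
    have h := mem_cDes'.mp hj
    by_cases h1 : j = 1
    · subst h1
      rw [if_pos rfl]
      apply (mem_cDes_rotate_one (by omega) (le_refl _)).mpr
      rwa [Nat.mod_self]
    · rw [if_neg h1]
      apply (mem_cDes_rotate_one (by omega) (by omega)).mpr
      have e1 : (j - 1) % τ.length = j - 1 := Nat.mod_eq_of_lt (by omega)
      rw [e1]
      have e2 : j - 1 + 1 = j := by omega
      rwa [e2]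
  · intro i hi
    have h := mem_cDes'.mp hi
    rw [List.length_rotate] at h
    rcases eq_or_lt_of_le h.2.1 with rfl | hlt
    · rw [Nat.mod_self, if_pos rfl]
    · rw [Nat.mod_eq_of_lt hlt, if_neg (by omega)]
      omega
  · intro j hj
    have h := mem_cDes'.mp hj
    by_cases h1 : j = 1
    · subst h1; rw [if_pos rfl, Nat.mod_self]
    · rw [if_neg h1, Nat.mod_eq_of_lt (by omega)]
      omega

lemma cdes_rotate (τ : List ℕ) (k : ℕ) : cdes (τ.rotate k) = cdes τ := by
  induction k generalizing τ with
  | zero => rw [List.rotate_zero]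
  | succ k ih =>
    have e : τ.rotate (k + 1) = (τ.rotate 1).rotate k := by
      rw [List.rotate_rotate, Nat.add_comm]
    rw [e, ih, cdes_rotate_one]

lemma cdes_pos {τ : List ℕ} (hnd : τ.Nodup) (h2 : 2 ≤ τ.length) : 1 ≤ cdes τ := by
  obtain ⟨m, hm, hmax⟩ : ∃ m ∈ τ.toFinset, ∀ x ∈ τ.toFinset, id x ≤ id m := by
    apply Finset.exists_max_image τ.toFinset id
    rw [List.toFinset_nonempty_iff]
    intro h; rw [h] at h2; simp at h2
  rw [List.mem_toFinset] at hm
  obtain ⟨p, hp, hpm⟩ := List.mem_iff_getElem.mp hm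
  have hmem : p + 1 ∈ cDes τ := by
    rw [mem_cDes']
    refine ⟨by omega, by omega, ?_⟩
    have hidx : (p + 1) % τ.length < τ.length := Nat.mod_lt _ (by omega)
    have e1 : p + 1 - 1 = p := by omega
    rw [e1, List.getD_eq_getElem _ _ hidx, List.getD_eq_getElem _ _ hp, hpm]
    have hle : τ[(p + 1) % τ.length] ≤ m := by
      have := hmax (τ[(p + 1) % τ.length]) (by rw [List.mem_toFinset]; exact List.getElem_mem _)
      simpa using this
    have hne : τ[(p + 1) % τ.length] ≠ m := by
      rw [← hpm]
      intro heq
      have hij := (List.Nodup.getElem_inj_iff hnd).mp heq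
      rcases Nat.lt_or_ge (p + 1) τ.length with hc | hc
      · rw [Nat.mod_eq_of_lt hc] at hij; omega
      · have e : p + 1 = τ.length := by omega
        rw [e, Nat.mod_self] at hij
        omega
    omega
  exact Finset.card_pos.mpr ⟨p + 1, hmem⟩

lemma exists_no_wrap {τ : List ℕ} (h1 : 1 ≤ τ.length) :
    ∃ i < τ.length, τ.length ∉ cDes (τ.rotate i) := by
  obtain ⟨m, hm, hmin⟩ : ∃ m ∈ τ.toFinset, ∀ x ∈ τ.toFinset, id m ≤ id x := by
    apply Finset.exists_min_image τ.toFinset id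
    rw [List.toFinset_nonempty_iff]
    intro h; rw [h] at h1; simp at h1
  rw [List.mem_toFinset] at hm
  obtain ⟨p, hp, hpm⟩ := List.mem_iff_getElem.mp hm
  refine ⟨(p + 1) % τ.length, Nat.mod_lt _ (by omega), ?_⟩
  intro hmem
  rw [mem_cDes', List.length_rotate] at hmem
  obtain ⟨-, -, hlt⟩ := hmem
  rw [Nat.mod_self] at hlt
  rw [getD_rotate τ _ 0 (by omega), getD_rotate τ _ (τ.length - 1) (by omega)] at hlt
  have e1 : (0 + (p + 1) % τ.length) % τ.length = (p + 1) % τ.length := by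
    rw [Nat.zero_add]
    exact Nat.mod_eq_of_lt (Nat.mod_lt _ (by omega))
  have e2 : (τ.length - 1 + (p + 1) % τ.length) % τ.length = p := by
    rw [Nat.add_mod_mod]
    have e : τ.length - 1 + (p + 1) = τ.length + p := by omega
    rw [e, Nat.add_mod_left, Nat.mod_eq_of_lt hp]
  rw [e1, e2] at hlt
  rw [List.getD_eq_getElem _ _ (Nat.mod_lt _ (show 0 < τ.length by omega)),
      List.getD_eq_getElem _ _ hp, hpm] at hlt
  have hle := hmin (τ[(p + 1) % τ.length]'(Nat.mod_lt _ (by omega)))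
    (by rw [List.mem_toFinset]; exact List.getElem_mem _)
  simp only [id] at hle
  omega

lemma cDes_eq_f {ρ : List ℕ} {c : ℕ} (hc : cdes ρ = c) (hc1 : 1 ≤ c) :
    cDes ρ = if (Des ρ).card = c - 1 then insert ρ.length (Des ρ) else Des ρ := by
  by_cases hn : ρ.length ∈ cDes ρ
  · have h1 : Des ρ = (cDes ρ).erase ρ.length := Des_eq_erase ρ
    have h2 : (Des ρ).card = c - 1 := by
      rw [h1, Finset.card_erase_of_mem hn]
      unfold cdes at hc
      omega
    rw [if_pos h2, h1, Finset.insert_erase hn]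
  · have h1 : Des ρ = cDes ρ := by rw [Des_eq_erase, Finset.erase_eq_of_notMem hn]
    have h2 : (Des ρ).card = c := by rw [h1]; exact hc
    rw [if_neg (by omega), h1]

lemma cycStat_cDes_eq {π : List ℕ} (hnd : π.Nodup) (h2 : 2 ≤ π.length) :
    cycStat cDes π = (cycStat Des π).map
      (fun S => if S.card = cdes π - 1 then insert π.length S else S) := by
  unfold cycStat
  rw [Multiset.map_map]
  apply Multiset.map_congr rfl
  intro i _
  have hlen : (π.rotate i).length = π.length := List.length_rotate π i
  have key := cDes_eq_f (ρ := π.rotate i) (c := cdes π) (cdes_rotate π i) (cdes_pos hnd h2)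
  rw [hlen] at key
  simpa using key

lemma cycStat_Des_eq (π : List ℕ) :
    cycStat Des π = (cycStat cDes π).map (fun S => S.erase π.length) := by
  unfold cycStat
  rw [Multiset.map_map]
  apply Multiset.map_congr rfl
  intro i _
  simp only [Function.comp_apply]
  rw [Des_eq_erase, List.length_rotate]

lemma sup_card_eq {π : List ℕ} (hnd : π.Nodup) (h2 : 2 ≤ π.length) :
    ((cycStat Des π).map Finset.card).sup = cdes π := by
  apply le_antisymm
  · rw [Multiset.sup_le]
    intro b hb
    rw [Multiset.mem_map] at hb
    obtain ⟨S, hS, rfl⟩ := hb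
    rw [cycStat, Multiset.mem_map] at hS
    obtain ⟨i, _, rfl⟩ := hS
    rw [Des_eq_erase]
    calc ((cDes (π.rotate i)).erase (π.rotate i).length).card
        ≤ (cDes (π.rotate i)).card := Finset.card_erase_le
      _ = cdes π := cdes_rotate π i
  · obtain ⟨i, hi, hno⟩ := exists_no_wrap (τ := π) (by omega)
    have hkey : (Des (π.rotate i)).card = cdes π := by
      rw [Des_eq_erase, List.length_rotate, Finset.erase_eq_of_notMem hno]
      exact cdes_rotate π i
    have hmem : (Des (π.rotate i)).card ∈ (cycStat Des π).map Finset.card := by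
      rw [Multiset.mem_map]
      exact ⟨Des (π.rotate i), Multiset.mem_map.mpr ⟨i, Multiset.mem_range.mpr hi, rfl⟩, rfl⟩
    calc cdes π = (Des (π.rotate i)).card := hkey.symm
      _ ≤ _ := Multiset.le_sup hmem

lemma cDes_small {τ : List ℕ} (h : τ.length ≤ 1) : cDes τ = ∅ := by
  ext i
  simp only [mem_cDes', Finset.notMem_empty, iff_false, not_and]
  intro h1 h2
  have hl : τ.length = 1 := by omega
  have hi : i = 1 := by omega
  rw [hl, hi]
  simp

lemma cycStat_cDes_small {τ : List ℕ} (h : τ.length ≤ 1) :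
    cycStat cDes τ = Multiset.replicate τ.length ∅ := by
  apply Multiset.eq_replicate.mpr
  constructor
  · simp [cycStat]
  · intro b hb
    rw [cycStat, Multiset.mem_map] at hb
    obtain ⟨i, _, rfl⟩ := hb
    exact cDes_small (by rw [List.length_rotate]; exact h)

end Aux

/-- The cyclic statistics `Des` and `cDes` are equivalent. -/
theorem Des_cDes_equivalent (π σ : List ℕ) (hπ : IsPerm π) (hσ : IsPerm σ)
    (hlen : π.length = σ.length) :
    cycStat Des π = cycStat Des σ ↔ cycStat cDes π = cycStat cDes σ := by
  constructor
  · intro h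
    rcases Nat.lt_or_ge π.length 2 with hn | hn
    · rw [cycStat_cDes_small (by omega), cycStat_cDes_small (by omega : σ.length ≤ 1), hlen]
    · have hn2 : 2 ≤ σ.length := hlen ▸ hn
      have hc : cdes π = cdes σ := by
        rw [← sup_card_eq hπ.1 hn, ← sup_card_eq hσ.1 hn2, h]
      rw [cycStat_cDes_eq hπ.1 hn, cycStat_cDes_eq hσ.1 hn2, h, hc, hlen]
  · intro h
    rw [cycStat_Des_eq π, cycStat_Des_eq σ, h, hlen]
end

section
/- The cyclic statistics Pk and cPk are equivalent: for all permutations π and σ of the same length, the multiset {{Pk π̄ : π̄ ∈ [π]}} equals the multiset {{Pk σ̄ : σ̄ ∈ [σ]}} if and only if the multiset {{cPk π̄ : π̄ ∈ [π]}} equals the multiset {{cPk σ̄ : σ̄ ∈ [σ]}}. -/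
/-!
The cyclic peak sets of the rotations of `π` are the translates of one set `S ⊆ ℤ/n`, and `Pk` of
a rotation is its `cPk` with the two end positions removed; so `cycStat Pk` is a function of
`cycStat cPk`. Conversely it suffices to find rotations of `π` and `σ` with the same `cPk`.
For `n ≥ 3`, `|S|` is read off `cycStat Pk` as the number of rotations with a peak at position 2.
If some rotation of `π` has no cyclic peak at either end, its `Pk` is its whole `cPk`, of size
`|S|`; that set is also `Pk` of a rotation of `σ`, whose `cPk` contains it and has the same size,
so the two `cPk` agree. Otherwise (and then, by the same argument, also for `σ`) every two
cyclically adjacent positions contain a peak; peaks are never adjacent, so they alternate and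
suitable rotations of `π` and `σ` both have the even positions as `cPk`. For `n = 2`, distinct
entries force this alternating case as well.
-/

open Finset

theorem Nat.count_add_right_of_periodic {p : ℕ → Prop} [DecidablePred p] {n : ℕ}
    (hp : Function.Periodic p n) (c : ℕ) : n.count (fun k => p (k + c)) = n.count p := by
  have h₁ := Nat.count_add' p n c
  have h₂ := Nat.count_add p n c
  have hshift : (fun k => p (n + k)) = p := funext fun k => by rw [add_comm, hp]
  simp only [hshift] at h₂
  omega

theorem List.getD_rotate_mod {α : Type*} (l : List α) (r k : ℕ) (d : α) :
    (l.rotate r).getD (k % l.length) d = l.getD ((k + r) % l.length) d := by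
  rcases eq_or_ne l [] with rfl | hl
  · simp
  have hn := List.length_pos_iff.2 hl
  rw [List.getD_eq_getElem _ _ (by simpa using Nat.mod_lt k hn),
    List.getD_eq_getElem _ _ (Nat.mod_lt _ hn), List.getElem_rotate]
  simp only [Nat.mod_add_mod]

theorem cycStat_eq_coe_map_cyclicPermutations {A : Type*} (st : List ℕ → A) {l : List ℕ}
    (hl : l ≠ []) : cycStat st l = (l.cyclicPermutations.map st : Multiset A) := by
  have hrot : l.cyclicPermutations = (List.range l.length).map l.rotate :=
    List.ext_getElem (by simp [List.length_cyclicPermutations_of_ne_nil _ hl]) (by simp)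
  rw [hrot, List.map_map]
  rfl

theorem cycStat_rotate {A : Type*} (st : List ℕ → A) (l : List ℕ) (r : ℕ) :
    cycStat st (l.rotate r) = cycStat st l := by
  rcases eq_or_ne l [] with rfl | hl
  · simp
  rw [cycStat_eq_coe_map_cyclicPermutations st hl,
    cycStat_eq_coe_map_cyclicPermutations st (by simpa using hl), List.cyclicPermutations_rotate,
    Multiset.coe_eq_coe]
  exact (List.rotate_perm _ r).map st

theorem rotate_mem_cycStat {A : Type*} (st : List ℕ → A) {l : List ℕ} (hl : l ≠ [])
    (r : ℕ) :
    st (l.rotate r) ∈ cycStat st l := by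
  rw [← List.rotate_mod]
  exact Multiset.mem_map.2
    ⟨r % l.length, Multiset.mem_range.2 (Nat.mod_lt _ (List.length_pos_iff.2 hl)), rfl⟩

/-- Cyclic peak at the 0-based position `j` (unlike the 1-based `cPk`), read modulo
`l.length`. -/
def IsCyclicPeak (l : List ℕ) (j : ℕ) : Prop :=
  l.getD ((j + l.length - 1) % l.length) 0 < l.getD (j % l.length) 0 ∧
    l.getD ((j + 1) % l.length) 0 < l.getD (j % l.length) 0

instance (l : List ℕ) : DecidablePred (IsCyclicPeak l) :=
  fun _ => inferInstanceAs (Decidable (_ ∧ _))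

theorem periodic_isCyclicPeak (l : List ℕ) : Function.Periodic (IsCyclicPeak l) l.length := by
  intro j
  simp only [IsCyclicPeak]
  rw [show j + l.length + l.length - 1 = j + l.length - 1 + l.length by omega,
    show j + l.length + 1 = j + 1 + l.length by omega]
  simp only [Nat.add_mod_right]

theorem IsCyclicPeak.not_succ {l : List ℕ} {j : ℕ} (h : IsCyclicPeak l j) :
    ¬IsCyclicPeak l (j + 1) := by
  rintro ⟨h₁, -⟩
  rw [show j + 1 + l.length - 1 = j + l.length by omega, Nat.add_mod_right] at h₁
  exact lt_asymm h.2 h₁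

theorem isCyclicPeak_rotate (l : List ℕ) (r j : ℕ) :
    IsCyclicPeak (l.rotate r) j ↔ IsCyclicPeak l (j + r) := by
  rcases eq_or_ne l [] with rfl | hl
  · simp [IsCyclicPeak]
  have hn := List.length_pos_iff.2 hl
  simp only [IsCyclicPeak, List.length_rotate, List.getD_rotate_mod]
  rw [show j + l.length - 1 + r = j + r + l.length - 1 by omega, add_right_comm j 1 r]

theorem mem_cPk_iff {l : List ℕ} {i : ℕ} :
    i ∈ cPk l ↔ (1 ≤ i ∧ i ≤ l.length) ∧ IsCyclicPeak l (i - 1) := by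
  simp only [cPk, mem_filter, mem_Icc, IsCyclicPeak]
  refine and_congr_right fun hi => ?_
  rw [show i - 1 + l.length - 1 = i + l.length - 2 by omega, Nat.sub_add_cancel hi.1,
    Nat.mod_eq_of_lt (by omega : i - 1 < l.length)]

theorem mem_cPk_rotate {l : List ℕ} {r i : ℕ} :
    i ∈ cPk (l.rotate r) ↔ (1 ≤ i ∧ i ≤ l.length) ∧ IsCyclicPeak l (i - 1 + r) := by
  rw [mem_cPk_iff, List.length_rotate, isCyclicPeak_rotate]

theorem mem_cPk_rotate_iff_mem_cPk {l : List ℕ} {r i : ℕ} :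
    i ∈ cPk (l.rotate r) ↔ (1 ≤ i ∧ i ≤ l.length) ∧ (i - 1 + r) % l.length + 1 ∈ cPk l := by
  rw [mem_cPk_rotate, mem_cPk_iff, Nat.add_sub_cancel, (periodic_isCyclicPeak l).map_mod_nat]
  refine and_congr_right fun hi => ?_
  have := Nat.mod_lt (i - 1 + r) (by omega : 0 < l.length)
  exact (and_iff_right ⟨by omega, by omega⟩).symm

theorem card_cPk (l : List ℕ) : #(cPk l) = #{j ∈ range l.length | IsCyclicPeak l j} := by
  refine card_nbij' (· - 1) (· + 1) (fun i hi => ?_) (fun j hj => ?_) (fun i hi => ?_)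
    (fun j _ => by simp)
  · simp only [coe_filter, mem_range, Set.mem_ofPred_eq, mem_coe, mem_cPk_iff] at hi ⊢
    exact ⟨by omega, hi.2⟩
  · simp only [coe_filter, mem_range, Set.mem_ofPred_eq, mem_coe, mem_cPk_iff] at hj ⊢
    exact ⟨by omega, hj.2⟩
  · simp only [mem_coe, mem_cPk_iff] at hi
    exact Nat.sub_add_cancel hi.1.1

theorem card_cPk_rotate (l : List ℕ) (r : ℕ) : #(cPk (l.rotate r)) = #(cPk l) := by
  rw [card_cPk, card_cPk, List.length_rotate, ← Nat.count_eq_card_filter_range,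
    ← Nat.count_eq_card_filter_range,
    ← Nat.count_add_right_of_periodic (periodic_isCyclicPeak l) r]
  congr 1
  exact funext fun j => propext (isCyclicPeak_rotate l r j)

theorem Pk_eq_filter_cPk (l : List ℕ) :
    Pk l = (cPk l).filter fun i => 2 ≤ i ∧ i ≤ l.length - 1 := by
  ext i
  simp only [Pk, cPk, mem_filter, mem_Icc]
  constructor
  · rintro ⟨hi, hprev, hnext⟩
    rw [show i + l.length - 2 = i - 2 + l.length by omega, Nat.add_mod_right,
      Nat.mod_eq_of_lt (by omega : i - 2 < l.length), Nat.mod_eq_of_lt (by omega : i < l.length)]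
    exact ⟨⟨⟨by omega, by omega⟩, hprev, hnext⟩, hi⟩
  · rintro ⟨⟨-, hprev, hnext⟩, hi⟩
    rw [show i + l.length - 2 = i - 2 + l.length by omega, Nat.add_mod_right,
      Nat.mod_eq_of_lt (by omega : i - 2 < l.length)] at hprev
    rw [Nat.mod_eq_of_lt (by omega : i < l.length)] at hnext
    exact ⟨hi, hprev, hnext⟩

theorem Pk_eq_cPk_iff {l : List ℕ} : Pk l = cPk l ↔ 1 ∉ cPk l ∧ l.length ∉ cPk l := by
  rw [Pk_eq_filter_cPk, filter_eq_self]
  constructor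
  · intro h
    exact ⟨fun h₁ => by have := h 1 h₁; omega,
      fun hn => by have := h _ hn; have := (mem_cPk_iff.1 hn).1; omega⟩
  · rintro ⟨h₁, hn⟩ i hi
    have := (mem_cPk_iff.1 hi).1
    have : i ≠ 1 := by rintro rfl; exact h₁ hi
    have : i ≠ l.length := by rintro rfl; exact hn hi
    omega

theorem cPk_eq_empty_of_length_le_one {l : List ℕ} (hl : l.length ≤ 1) : cPk l = ∅ := by
  refine eq_empty_of_forall_notMem fun i hi => ?_
  obtain ⟨hi, hpeak⟩ := mem_cPk_iff.1 hi
  obtain rfl : i = 1 := by omega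
  have hl₁ : l.length = 1 := by omega
  simp [IsCyclicPeak, hl₁] at hpeak

theorem isCyclicPeak_or_succ_of_length_eq_two {l : List ℕ} (hl : l.length = 2) (hnd : l.Nodup)
    (j : ℕ) : IsCyclicPeak l j ∨ IsCyclicPeak l (j + 1) := by
  have h₀₁ : IsCyclicPeak l 0 ∨ IsCyclicPeak l 1 := by
    obtain ⟨a, b, rfl⟩ := List.length_eq_two.1 hl
    have hab : a ≠ b := by simpa using hnd
    simpa [IsCyclicPeak] using hab.lt_or_gt.symm
  have hper := hl ▸ periodic_isCyclicPeak l
  rw [← hper.map_mod_nat j, ← hper.map_mod_nat (j + 1), show (j + 1) % 2 = 1 - j % 2 by omega]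
  rcases Nat.mod_two_eq_zero_or_one j with h | h <;> rw [h] <;> tauto

theorem isCyclicPeak_or_succ_of_forall_Pk_ne_cPk {l : List ℕ} (hl : 0 < l.length)
    (h : ∀ r, Pk (l.rotate r) ≠ cPk (l.rotate r)) (j : ℕ) :
    IsCyclicPeak l j ∨ IsCyclicPeak l (j + 1) := by
  have := h (j + 1)
  rw [Ne, Pk_eq_cPk_iff, mem_cPk_rotate, mem_cPk_rotate, List.length_rotate,
    show l.length - 1 + (j + 1) = j + l.length by omega, periodic_isCyclicPeak l j] at this
  simp only [le_refl, Nat.sub_self, zero_add, not_and] at this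
  tauto

theorem exists_cPk_rotate_eq_filter_even {l : List ℕ}
    (hcover : ∀ j, IsCyclicPeak l j ∨ IsCyclicPeak l (j + 1)) :
    ∃ r, cPk (l.rotate r) = (Icc 1 l.length).filter Even := by
  have alternate (j : ℕ) : IsCyclicPeak l (j + 1) ↔ ¬IsCyclicPeak l j :=
    ⟨fun h hj => hj.not_succ h, (hcover j).resolve_left⟩
  have periodic_two : Function.Periodic (IsCyclicPeak l) 2 := fun j => by
    simp only [show j + 2 = j + 1 + 1 by omega, alternate, not_not]
  have parity (j : ℕ) : IsCyclicPeak l j ↔ (IsCyclicPeak l 0 ↔ j % 2 = 0) := by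
    rw [← periodic_two.map_mod_nat]
    rcases Nat.mod_two_eq_zero_or_one j with h | h <;> simp [h, alternate 0]
  refine ⟨if IsCyclicPeak l 0 then 1 else 0, ?_⟩
  ext i
  rw [mem_cPk_rotate, mem_filter, mem_Icc, Nat.even_iff, parity]
  refine and_congr_right fun hi => ?_
  split_ifs with h₀ <;> simp only [h₀, true_iff, false_iff] <;> omega

theorem exists_cPk_rotate_eq_of_alternating {l m : List ℕ} (hlen : l.length = m.length)
    (hl : ∀ j, IsCyclicPeak l j ∨ IsCyclicPeak l (j + 1))
    (hm : ∀ j, IsCyclicPeak m j ∨ IsCyclicPeak m (j + 1)) :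
    ∃ r r', cPk (l.rotate r) = cPk (m.rotate r') := by
  obtain ⟨r, hr⟩ := exists_cPk_rotate_eq_filter_even hl
  obtain ⟨r', hr'⟩ := exists_cPk_rotate_eq_filter_even hm
  exact ⟨r, r', by rw [hr, hr', hlen]⟩

theorem cycStat_Pk_eq_map_cycStat_cPk (l : List ℕ) :
    cycStat Pk l = (cycStat cPk l).map (filter fun i => 2 ≤ i ∧ i ≤ l.length - 1) := by
  simp only [cycStat, Multiset.map_map, Function.comp_def, Pk_eq_filter_cPk, List.length_rotate]

theorem cPk_rotate_eq_of_cPk_eq {l m : List ℕ} (hlen : l.length = m.length) (h : cPk l = cPk m)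
    (r : ℕ) : cPk (l.rotate r) = cPk (m.rotate r) := by
  ext i
  rw [mem_cPk_rotate_iff_mem_cPk, mem_cPk_rotate_iff_mem_cPk, hlen, h]

theorem cycStat_cPk_eq_of_cPk_rotate_eq {l m : List ℕ} (hlen : l.length = m.length) {r r' : ℕ}
    (h : cPk (l.rotate r) = cPk (m.rotate r')) : cycStat cPk l = cycStat cPk m := by
  rw [← cycStat_rotate cPk l r, ← cycStat_rotate cPk m r']
  simp only [cycStat, List.length_rotate, hlen]
  exact Multiset.map_congr rfl fun k _ => cPk_rotate_eq_of_cPk_eq (by simpa using hlen) h k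

theorem countP_two_mem_cycStat_Pk {l : List ℕ} (hl : 3 ≤ l.length) :
    (cycStat Pk l).countP (2 ∈ ·) = #(cPk l) := by
  have two_mem (k : ℕ) : 2 ∈ Pk (l.rotate k) ↔ IsCyclicPeak l (k + 1) := by
    rw [Pk_eq_filter_cPk, mem_filter, mem_cPk_rotate, List.length_rotate,
      Nat.add_comm (2 - 1)]
    exact ⟨fun h => h.1.2, fun h => ⟨⟨by omega, h⟩, by omega⟩⟩
  rw [cycStat, Multiset.countP_map, card_cPk, ← Nat.count_eq_card_filter_range,
    ← Nat.count_add_right_of_periodic (periodic_isCyclicPeak l) 1, Nat.count_eq_card_filter_range]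
  simp only [Multiset.filter_congr fun k _ => two_mem k]
  rfl

theorem exists_rotate_Pk_eq_cPk_of_cycStat_Pk_eq {l m : List ℕ} (hl : 3 ≤ l.length)
    (hlen : l.length = m.length) (h : cycStat Pk l = cycStat Pk m) {r : ℕ}
    (hr : Pk (l.rotate r) = cPk (l.rotate r)) :
    ∃ r', Pk (m.rotate r') = cPk (m.rotate r') ∧ cPk (m.rotate r') = cPk (l.rotate r) := by
  have hmem : Pk (l.rotate r) ∈ cycStat Pk m :=
    h ▸ rotate_mem_cycStat Pk (List.length_pos_iff.1 (by omega)) r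
  obtain ⟨r', -, hr'⟩ := Multiset.mem_map.1 hmem
  have hcard : #(cPk m) = #(cPk l) := by
    rw [← countP_two_mem_cycStat_Pk hl, ← countP_two_mem_cycStat_Pk (hlen ▸ hl), h]
  have hfull : Pk (m.rotate r') = cPk (m.rotate r') := by
    refine eq_of_subset_of_card_le (Pk_eq_filter_cPk _ ▸ filter_subset _ _) ?_
    rw [hr', hr, card_cPk_rotate, card_cPk_rotate, hcard]
  exact ⟨r', hfull, by rw [← hfull, hr', hr]⟩

/-- The cyclic statistics `Pk` and `cPk` are equivalent. -/
theorem Pk_cPk_equivalent (π σ : List ℕ) (hπ : IsPerm π) (hσ : IsPerm σ)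
    (hlen : π.length = σ.length) :
    cycStat Pk π = cycStat Pk σ ↔ cycStat cPk π = cycStat cPk σ := by
  refine ⟨fun h => ?_, fun h => by
    rw [cycStat_Pk_eq_map_cycStat_cPk, cycStat_Pk_eq_map_cycStat_cPk, h, hlen]⟩
  suffices ∃ r r', cPk (π.rotate r) = cPk (σ.rotate r') by
    obtain ⟨r, r', h'⟩ := this
    exact cycStat_cPk_eq_of_cPk_rotate_eq hlen h'
  obtain hn | hn | hn : π.length ≤ 1 ∨ π.length = 2 ∨ 3 ≤ π.length := by omega
  · refine ⟨0, 0, ?_⟩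
    rw [List.rotate_zero, List.rotate_zero, cPk_eq_empty_of_length_le_one hn,
      cPk_eq_empty_of_length_le_one (hlen ▸ hn)]
  · exact exists_cPk_rotate_eq_of_alternating hlen
      (isCyclicPeak_or_succ_of_length_eq_two hn hπ.1)
      (isCyclicPeak_or_succ_of_length_eq_two (hlen ▸ hn) hσ.1)
  by_cases hfull : ∃ r, Pk (π.rotate r) = cPk (π.rotate r)
  · obtain ⟨r, hr⟩ := hfull
    obtain ⟨r', -, h'⟩ := exists_rotate_Pk_eq_cPk_of_cycStat_Pk_eq hn hlen h hr
    exact ⟨r, r', h'.symm⟩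
  simp only [not_exists] at hfull
  have hfullσ (r' : ℕ) : Pk (σ.rotate r') ≠ cPk (σ.rotate r') := fun hr' =>
    have ⟨r, hr, _⟩ := exists_rotate_Pk_eq_cPk_of_cycStat_Pk_eq (hlen ▸ hn) hlen.symm h.symm hr'
    hfull r hr
  exact exists_cPk_rotate_eq_of_alternating hlen
    (isCyclicPeak_or_succ_of_forall_Pk_ne_cPk (by omega) hfull)
    (isCyclicPeak_or_succ_of_forall_Pk_ne_cPk (by omega) hfullσ)
end

section
/- Let π be a permutation of length n ≥ 1 and let π′ = π_n π₁ π₂ ⋯ π_{n−1} be the permutation obtained from π by moving its last letter to the front. Then cmaj π′ = maj π + cdes π. -/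
/-!
Moving the last letter to the front shifts every position cyclically by one, so
`cDes π' = {i mod n + 1 : i ∈ cDes π}` and `cmaj π' = ∑_{i ∈ cDes π} (i mod n + 1)`.
This is `∑_{i ∈ cDes π} (i mod n) + cdes π`, and the first sum is `maj π` because
`Des π = cDes π \ {n}` while the position `n` contributes `n mod n = 0`.
-/

theorem List.getD_rotate {α : Type*} (l : List α) (n k : ℕ) (d : α) (hk : k < l.length) :
    (l.rotate n).getD k d = l.getD ((k + n) % l.length) d := by
  simp only [List.getD_eq_getElem?_getD, List.getElem?_rotate hk]

section CyclicDescents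

variable (π : List ℕ)

theorem cDes_subset_Icc : cDes π ⊆ Finset.Icc 1 π.length :=
  Finset.filter_subset _ _

theorem mod_length_add_one_mem_cDes_rotate_iff {i : ℕ} (hi : i ∈ Finset.Icc 1 π.length) :
    i % π.length + 1 ∈ cDes (π.rotate (π.length - 1)) ↔ i ∈ cDes π := by
  obtain ⟨hi1, hin⟩ := Finset.mem_Icc.mp hi
  simp only [cDes, Finset.mem_filter, Finset.mem_Icc, List.length_rotate, Nat.add_sub_cancel]
  set n := π.length
  have hn : 0 < n := by omega
  have hnext : ((i % n + 1) % n + (n - 1)) % n = i % n := by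
    rw [Nat.mod_add_mod, show i % n + 1 + (n - 1) = i % n + n by omega, Nat.add_mod_right,
      Nat.mod_mod]
  have hprev : (i % n + (n - 1)) % n = i - 1 := by
    rw [Nat.mod_add_mod, show i + (n - 1) = i - 1 + n by omega, Nat.add_mod_right,
      Nat.mod_eq_of_lt (by omega)]
  rw [List.getD_rotate _ _ _ _ (Nat.mod_lt _ hn), List.getD_rotate _ _ _ _ (Nat.mod_lt _ hn),
    hnext, hprev]
  exact ⟨fun h => ⟨⟨hi1, hin⟩, h.2⟩, fun h => ⟨⟨by omega, Nat.mod_lt i hn⟩, h.2⟩⟩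

theorem cDes_rotate_length_sub_one :
    cDes (π.rotate (π.length - 1)) = (cDes π).image (· % π.length + 1) := by
  ext j
  simp only [Finset.mem_image]
  constructor
  · intro hj
    obtain ⟨hj1, hjn⟩ := Finset.mem_Icc.mp (by simpa using cDes_subset_Icc _ hj)
    set i := if j = 1 then π.length else j - 1
    have hi : i ∈ Finset.Icc 1 π.length := by
      simp only [i, Finset.mem_Icc]; split_ifs <;> omega
    have hij : i % π.length + 1 = j := by
      by_cases h : j = 1
      · simp [i, h]
      · simp only [i, if_neg h]; rw [Nat.mod_eq_of_lt (by omega)]; omega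
    exact ⟨i, (mod_length_add_one_mem_cDes_rotate_iff π hi).mp (hij ▸ hj), hij⟩
  · rintro ⟨i, hi, rfl⟩
    exact (mod_length_add_one_mem_cDes_rotate_iff π (cDes_subset_Icc π hi)).mpr hi

theorem Des_eq_erase_cDes : Des π = (cDes π).erase π.length := by
  ext i
  simp only [Des, cDes, Finset.mem_erase, Finset.mem_filter, Finset.mem_Icc]
  constructor
  · rintro ⟨⟨hi1, hin⟩, h⟩
    exact ⟨by omega, ⟨hi1, by omega⟩, by rwa [Nat.mod_eq_of_lt (by omega)]⟩
  · rintro ⟨hne, ⟨hi1, hin⟩, h⟩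
    exact ⟨⟨hi1, by omega⟩, by rwa [Nat.mod_eq_of_lt (by omega)] at h⟩

theorem maj_eq_sum_cDes_mod_length : maj π = ∑ i ∈ cDes π, i % π.length := by
  rw [maj, Des_eq_erase_cDes, ← Finset.sum_erase _ (f := (· % π.length)) (Nat.mod_self π.length)]
  refine Finset.sum_congr rfl fun i hi => ?_
  have hin := Finset.mem_Icc.mp (cDes_subset_Icc π (Finset.mem_of_mem_erase hi))
  rw [Nat.mod_eq_of_lt (lt_of_le_of_ne hin.2 (Finset.ne_of_mem_erase hi))]

end CyclicDescents

theorem cmaj_rotate_last_general (π : List ℕ) :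
    cmaj (π.rotate (π.length - 1)) = maj π + cdes π := by
  have hinj : Set.InjOn (· % π.length + 1) (cDes π) := fun i hi j hj h =>
    Nat.mod_injOn_Ico 1 π.length (by simpa [Nat.add_comm] using cDes_subset_Icc π hi)
      (by simpa [Nat.add_comm] using cDes_subset_Icc π hj) (Nat.succ_injective h)
  calc cmaj (π.rotate (π.length - 1))
      = ∑ i ∈ cDes π, (i % π.length + 1) := by
        rw [cmaj, cDes_rotate_length_sub_one, Finset.sum_image hinj]
    _ = maj π + cdes π := by
        rw [Finset.sum_add_distrib, maj_eq_sum_cDes_mod_length, cdes, Finset.card_eq_sum_ones]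

/-- Moving the last letter of a nonempty permutation `π` to the front yields a
permutation `π'` with `cmaj π' = maj π + cdes π`. -/
theorem cmaj_rotate_last (π : List ℕ) (hπ : IsPerm π) (hlen : 1 ≤ π.length) :
    cmaj (π.rotate (π.length - 1)) = maj π + cdes π :=
  cmaj_rotate_last_general π
end
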